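/- The ℚ-algebra homomorphism ℚ[b₁,b₂,b₃,d₂] → ℚ[b₁,b₂,d₂]/⟨b₁²d₂−3d₂², b₁²b₂−b₂d₂−3d₂², b₁⁴+3b₂²−9b₂d₂−3d₂², 2b₁b₂d₂−3b₁d₂², 3b₁b₂²−7b₁d₂²⟩ sending b₁ ↦ b₁, b₂ ↦ b₂, d₂ ↦ d₂ and b₃ ↦ (−b₁³+4b₁d₂)/3 descends to a ℚ-algebra isomorphism ℚ[b₁,b₂,b₃,d₂]/⟨r₁,r₂,r₃,r₄,r₅,r₆⟩ ≅ ℚ[b₁,b₂,d₂]/⟨b₁²d₂−3d₂², b₁²b₂−b₂d₂−3d₂², b₁⁴+3b₂²−9b₂d₂−3d₂², 2b₁b₂d₂−3b₁d₂², 3b₁b₂²−7b₁d₂²⟩, where r₁ := −b₁³+4b₁d₂−3b₃, r₂ := −b₁⁴+5b₁²d₂−2b₁b₃−b₂²+3b₂d₂−6d₂², r₃ := −b₁²b₂+b₂d₂+3d₂², r₄ := −b₁³b₂+b₁²b₃+5b₁b₂d₂−b₁b₂²+b₂b₃−6b₃d₂, r₅ := b₁b₃−b₂²+3b₂d₂−3d₂²,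 r₆ := b₁⁵−3b₁³b₂−4b₁³d₂+6b₁²b₃+9b₁b₂d₂+3b₁d₂²+3b₂b₃−21b₃d₂. -/

import Mathlib

open MvPolynomial

noncomputable section

/-- Variables of ℚ[b₁,b₂,d₂]: `X 0 = b₁`, `X 1 = b₂`, `X 2 = d₂`. -/
abbrev PN := MvPolynomial (Fin 3) ℚ

/-- The ideal presenting the Chow ring of N = N(3;2,3). -/
def J : Ideal PN := Ideal.span
  { X 0 ^ 2 * X 2 - 3 * X 2 ^ 2,
    X 0 ^ 2 * X 1 - X 1 * X 2 - 3 * X 2 ^ 2,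
    X 0 ^ 4 + 3 * X 1 ^ 2 - 9 * X 1 * X 2 - 3 * X 2 ^ 2,
    2 * X 0 * X 1 * X 2 - 3 * X 0 * X 2 ^ 2,
    3 * X 0 * X 1 ^ 2 - 7 * X 0 * X 2 ^ 2 }

/-- The Chow ring of N. -/
abbrev RN := PN ⧸ J

/-- Variables of ℚ[b₁,b₂,b₃,d₂]: `X 0 = b₁`, `X 1 = b₂`, `X 2 = b₃`, `X 3 = d₂`.
The ideal generated by the relations r₁,…,r₆. -/
def Irel : Ideal (MvPolynomial (Fin 4) ℚ) := Ideal.span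
  { -X 0 ^ 3 + 4 * X 0 * X 3 - 3 * X 2,
    -X 0 ^ 4 + 5 * X 0 ^ 2 * X 3 - 2 * X 0 * X 2 - X 1 ^ 2 + 3 * X 1 * X 3 - 6 * X 3 ^ 2,
    -X 0 ^ 2 * X 1 + X 1 * X 3 + 3 * X 3 ^ 2,
    -X 0 ^ 3 * X 1 + X 0 ^ 2 * X 2 + 5 * X 0 * X 1 * X 3 - X 0 * X 1 ^ 2 + X 1 * X 2
      - 6 * X 2 * X 3,
    X 0 * X 2 - X 1 ^ 2 + 3 * X 1 * X 3 - 3 * X 3 ^ 2,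
    X 0 ^ 5 - 3 * X 0 ^ 3 * X 1 - 4 * X 0 ^ 3 * X 3 + 6 * X 0 ^ 2 * X 2 + 9 * X 0 * X 1 * X 3
      + 3 * X 0 * X 3 ^ 2 + 3 * X 1 * X 2 - 21 * X 2 * X 3 }

/-- The homomorphism ℚ[b₁,b₂,b₃,d₂] → ℚ[b₁,b₂,d₂]/J sending b₁ ↦ b₁, b₂ ↦ b₂,
b₃ ↦ (−b₁³+4b₁d₂)/3, d₂ ↦ d₂. -/
def φ : MvPolynomial (Fin 4) ℚ →ₐ[ℚ] RN :=
  aeval fun i => Ideal.Quotient.mk J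
    (![X 0, X 1, C (1 / 3 : ℚ) * (-X 0 ^ 3 + 4 * X 0 * X 2), X 2] i)

/-!
The relation r₁ = −b₁³ + 4b₁d₂ − 3b₃ solves for b₃, so ℚ[b₁,b₂,b₃,d₂]/⟨r₁,…,r₆⟩ is a quotient of
ℚ[b₁,b₂,d₂]. Substituting b₃ = (−b₁³+4b₁d₂)/3 sends r₂,…,r₆ into J, and conversely each generator
of J is a combination of the rᵢ; hence φ and the inclusion b₁,b₂,d₂ ↦ b₁,b₂,d₂ descend to mutually
inverse maps of the quotients.
-/

lemma isUnit_ofNat_of_algebraRat (A : Type*) [Semiring A] [Algebra ℚ A] (n : ℕ) [n.AtLeastTwo] :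
    IsUnit (OfNat.ofNat n : A) := by
  have := (isUnit_iff_ne_zero.2 (OfNat.ofNat_ne_zero n : (OfNat.ofNat n : ℚ) ≠ 0)).map
    (algebraMap ℚ A)
  rwa [map_ofNat] at this

lemma φ_X_zero : φ (X 0) = Ideal.Quotient.mk J (X 0) := by simp [φ]

lemma φ_X_one : φ (X 1) = Ideal.Quotient.mk J (X 1) := by simp [φ]

lemma φ_X_three : φ (X 3) = Ideal.Quotient.mk J (X 2) := by simp [φ]

lemma three_mul_φ_X_two : 3 * φ (X 2) =
    -Ideal.Quotient.mk J (X 0) ^ 3 +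
      4 * Ideal.Quotient.mk J (X 0) * Ideal.Quotient.mk J (X 2) := by
  have h : (3 : PN) * C (1 / 3) = 1 := by rw [← map_ofNat C 3, ← C_mul]; norm_num
  rw [φ, aeval_X]
  simp only [Matrix.cons_val_two, Matrix.tail_cons, Matrix.head_cons]
  rw [← map_ofNat (Ideal.Quotient.mk J) 3, ← map_mul, ← mul_assoc, h, one_mul]
  simp only [map_add, map_neg, map_mul, map_pow, map_ofNat]

/- The certificates below express `3 rᵢ` through the generators of `J` and the relation
`3 b₃ = -b₁³ + 4 b₁ d₂` (and, in `J_le_ker_ψ`, each generator of `J` times 3 through the `rᵢ`),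
so that all coefficients are integral. -/
theorem Irel_le_ker_φ : Irel ≤ RingHom.ker φ := by
  have hJ := Ideal.span_le.1 (Ideal.mk_ker (I := J)).ge
  simp only [Set.insert_subset_iff, Set.singleton_subset_iff, SetLike.mem_coe, RingHom.mem_ker,
    map_add, map_sub, map_mul, map_pow, map_ofNat] at hJ
  obtain ⟨h₁, h₂, h₃, h₄, h₅⟩ := hJ
  have h₀ := three_mul_φ_X_two
  have cancel₃ : ∀ {x y : RN}, 3 * x = 3 * y → x = y :=
    (isUnit_ofNat_of_algebraRat RN 3).mul_left_cancel
  refine Ideal.span_le.2 ?_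
  simp only [Set.insert_subset_iff, Set.singleton_subset_iff, SetLike.mem_coe, RingHom.mem_ker,
    map_add, map_sub, map_neg, map_mul, map_pow, map_ofNat, φ_X_zero, φ_X_one, φ_X_three]
  set b₁ := Ideal.Quotient.mk J (X 0)
  set b₂ := Ideal.Quotient.mk J (X 1)
  set d₂ := Ideal.Quotient.mk J (X 2)
  refine ⟨?_, ?_, ?_, ?_, ?_, ?_⟩
  · linear_combination -h₀
  · apply cancel₃
    linear_combination (-2 * b₁) * h₀ + 7 * h₁ - h₃
  · linear_combination -h₂
  · apply cancel₃
    linear_combination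
      (b₁ ^ 2 + b₂ - 6 * d₂) * h₀ + 10 * b₁ * h₁ - 4 * b₁ * h₂ - b₁ * h₃ + 3 * h₄
  · apply cancel₃
    linear_combination b₁ * h₀ + 4 * h₁ - h₃
  · apply cancel₃
    linear_combination
      (6 * b₁ ^ 2 + 3 * b₂ - 21 * d₂) * h₀ + 33 * b₁ * h₁ - 12 * b₁ * h₂ - 3 * b₁ * h₃ + 3 * h₅

def ψ : PN →ₐ[ℚ] MvPolynomial (Fin 4) ℚ ⧸ Irel :=
  aeval fun i => Ideal.Quotient.mk Irel (X (![0, 1, 3] i))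

@[simp]
lemma ψ_X (i : Fin 3) : ψ (X i) = Ideal.Quotient.mk Irel (X (![0, 1, 3] i)) := aeval_X _ _

theorem J_le_ker_ψ : J ≤ RingHom.ker ψ := by
  have hI := Ideal.span_le.1 (Ideal.mk_ker (I := Irel)).ge
  simp only [Set.insert_subset_iff, Set.singleton_subset_iff, SetLike.mem_coe, RingHom.mem_ker,
    map_add, map_sub, map_neg, map_mul, map_pow, map_ofNat] at hI
  obtain ⟨h₁, h₂, h₃, h₄, h₅, h₆⟩ := hI
  have cancel₃ : ∀ {x y : MvPolynomial (Fin 4) ℚ ⧸ Irel}, 3 * x = 3 * y → x = y :=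
    (isUnit_ofNat_of_algebraRat _ 3).mul_left_cancel
  refine Ideal.span_le.2 ?_
  simp only [Set.insert_subset_iff, Set.singleton_subset_iff, SetLike.mem_coe, RingHom.mem_ker,
    map_add, map_sub, map_mul, map_pow, map_ofNat, ψ_X, Matrix.cons_val_zero, Matrix.cons_val_one,
    Matrix.cons_val_two, Matrix.head_cons, Matrix.tail_cons]
  set b₁ := Ideal.Quotient.mk Irel (X 0)
  set b₂ := Ideal.Quotient.mk Irel (X 1)
  set d₂ := Ideal.Quotient.mk Irel (X 3)
  refine ⟨?_, ?_, ?_, ?_, ?_⟩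
  · apply cancel₃
    linear_combination -3 * b₁ * h₁ + 3 * h₂ - 3 * h₅
  · linear_combination -h₃
  · apply cancel₃
    linear_combination -15 * b₁ * h₁ + 12 * h₂ - 21 * h₅
  · apply cancel₃
    linear_combination
      (6 * b₁ ^ 2 + b₂ - 6 * d₂) * h₁ - 6 * b₁ * h₂ - 4 * b₁ * h₃ + 3 * h₄ + 3 * b₁ * h₅
  · apply cancel₃
    linear_combination
      (24 * b₁ ^ 2 + 3 * b₂ - 21 * d₂) * h₁ - 21 * b₁ * h₂ - 12 * b₁ * h₃ + 12 * b₁ * h₅ + 3 * h₆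

def φbar : MvPolynomial (Fin 4) ℚ ⧸ Irel →ₐ[ℚ] RN :=
  Ideal.Quotient.liftₐ Irel φ fun _ h => Irel_le_ker_φ h

def ψbar : RN →ₐ[ℚ] MvPolynomial (Fin 4) ℚ ⧸ Irel :=
  Ideal.Quotient.liftₐ J ψ fun _ h => J_le_ker_ψ h

@[simp]
lemma φbar_mk (p : MvPolynomial (Fin 4) ℚ) : φbar (Ideal.Quotient.mk Irel p) = φ p := rfl

@[simp]
lemma ψbar_mk (p : PN) : ψbar (Ideal.Quotient.mk J p) = ψ p := rfl

lemma φbar_comp_ψbar : φbar.comp ψbar = AlgHom.id ℚ RN := by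
  refine Ideal.Quotient.algHom_ext ℚ (MvPolynomial.algHom_ext fun i => ?_)
  fin_cases i <;> simp [φ_X_zero, φ_X_one, φ_X_three]

lemma ψbar_φ_X_two : ψbar (φ (X 2)) = Ideal.Quotient.mk Irel (X 2) := by
  have hr₁ : Ideal.Quotient.mk Irel (-X 0 ^ 3 + 4 * X 0 * X 3 - 3 * X 2) = 0 :=
    Ideal.Quotient.eq_zero_iff_mem.2 (Ideal.subset_span (Set.mem_insert _ _))
  have h := congrArg ψbar three_mul_φ_X_two
  simp only [map_add, map_sub, map_neg, map_mul, map_pow, map_ofNat, ψbar_mk, ψ_X,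
    Matrix.cons_val_zero, Matrix.cons_val_two, Matrix.tail_cons, Matrix.head_cons] at hr₁ h
  refine (isUnit_ofNat_of_algebraRat _ 3).mul_left_cancel ?_
  linear_combination h + hr₁

lemma ψbar_comp_φbar : ψbar.comp φbar = AlgHom.id ℚ (MvPolynomial (Fin 4) ℚ ⧸ Irel) := by
  refine Ideal.Quotient.algHom_ext ℚ (MvPolynomial.algHom_ext fun i => ?_)
  fin_cases i <;> simp [φ_X_zero, φ_X_one, φ_X_three, ψbar_φ_X_two]

/-- φ kills the relations r₁,…,r₆, and descends to a ℚ-algebra isomorphism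
ℚ[b₁,b₂,b₃,d₂]/⟨r₁,…,r₆⟩ ≅ ℚ[b₁,b₂,d₂]/J. -/
theorem chow_ring_N_presentations :
    Irel ≤ RingHom.ker φ ∧
    ∃ e : (MvPolynomial (Fin 4) ℚ ⧸ Irel) ≃ₐ[ℚ] RN,
      ∀ p : MvPolynomial (Fin 4) ℚ, e (Ideal.Quotient.mk Irel p) = φ p :=
  ⟨Irel_le_ker_φ, AlgEquiv.ofAlgHom φbar ψbar φbar_comp_ψbar ψbar_comp_φbar, φbar_mk⟩
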